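/- arXiv:math/0603258 — 3 statements merged into one kernel-verified Lean document; each statement's English description precedes it below -/
import Mathlib

section
/- Let α > 0 and let Z(x) = e^{-αx} (real exponential decay). For every real s > 0, lim_{ε→0⁺} Im ∫₀^∞ e^{-αx}/((-s + iε) + x) dx = −π e^{-αs}. -/
open MeasureTheory Set Complex Filter

/-!
For real `a`, `Im (a / (t + iε)) = -π a P_ε(t)` with `P_ε(t) = ε / (π (ε² + t²))` the Poisson
kernel of the upper half-plane. Hence the imaginary part in question is `-π` times the Poisson
integral of `e^{-αx} 1_{x > 0}` at `s`. As `ε → 0⁺` the kernels `P_ε(· - s)` form an approximate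
identity (nonnegative, total mass `1` concentrating at `s`), and `s > 0` is an interior point of
`(0, ∞)` where the integrand is continuous, so the integral tends to `-π e^{-αs}`.
-/

open scoped Real Topology

noncomputable def halfPlanePoissonKernel (ε x : ℝ) : ℝ := π⁻¹ * (ε / (ε ^ 2 + x ^ 2))

section halfPlanePoissonKernel

variable {ε : ℝ}

lemma halfPlanePoissonKernel_nonneg (hε : 0 ≤ ε) (x : ℝ) : 0 ≤ halfPlanePoissonKernel ε x := by
  unfold halfPlanePoissonKernel; positivity

lemma continuous_halfPlanePoissonKernel (hε : ε ≠ 0) : Continuous (halfPlanePoissonKernel ε) :=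
  continuous_const.mul <| continuous_const.div (by fun_prop) fun x => by positivity

lemma halfPlanePoissonKernel_le_of_le_abs (hε : 0 ≤ ε) {δ x : ℝ} (hδ : 0 < δ) (hx : δ ≤ |x|) :
    halfPlanePoissonKernel ε x ≤ π⁻¹ * (ε / δ ^ 2) := by
  have : δ ^ 2 ≤ ε ^ 2 + x ^ 2 := by nlinarith [sq_abs x, sq_nonneg ε]
  unfold halfPlanePoissonKernel
  gcongr

lemma integral_halfPlanePoissonKernel (a b : ℝ) :
    ∫ x in a..b, halfPlanePoissonKernel ε x =
      π⁻¹ * (Real.arctan (b / ε) - Real.arctan (a / ε)) := by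
  simp only [halfPlanePoissonKernel, intervalIntegral.integral_const_mul, integral_div_sq_add_sq]

lemma tendsto_integral_halfPlanePoissonKernel {a b : ℝ} (ha : a < 0) (hb : 0 < b) :
    Tendsto (fun ε => ∫ x in a..b, halfPlanePoissonKernel ε x) (𝓝[>] 0) (𝓝 1) := by
  have hatTop : ∀ c : ℝ, 0 < c →
      Tendsto (fun ε => Real.arctan (c / ε)) (𝓝[>] 0) (𝓝 (π / 2)) := fun c hc =>
    (tendsto_nhds_of_tendsto_nhdsWithin Real.tendsto_arctan_atTop).comp <|
      (tendsto_inv_nhdsGT_zero.const_mul_atTop hc).congr fun ε => (div_eq_mul_inv c ε).symm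
  have hlim := ((hatTop b hb).sub ((hatTop (-a) (neg_pos.2 ha)).neg)).const_mul π⁻¹
  rw [show π⁻¹ * (π / 2 - -(π / 2)) = 1 by field_simp; ring] at hlim
  refine hlim.congr fun ε => ?_
  rw [integral_halfPlanePoissonKernel, neg_div, Real.arctan_neg, neg_neg]

lemma tendstoUniformlyOn_halfPlanePoissonKernel_sub {δ : ℝ} (hδ : 0 < δ) (x₀ : ℝ) :
    TendstoUniformlyOn (fun ε x => halfPlanePoissonKernel ε (x - x₀)) 0 (𝓝[>] 0)
      {x | δ ≤ |x - x₀|} := by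
  rw [Metric.tendstoUniformlyOn_iff]
  intro b hb
  filter_upwards [Ioo_mem_nhdsGT (show (0:ℝ) < π * δ ^ 2 * b by positivity)]
    with ε ⟨hε, hεb⟩ x hx
  rw [Pi.zero_apply, dist_zero_left, Real.norm_of_nonneg (halfPlanePoissonKernel_nonneg hε.le _)]
  calc halfPlanePoissonKernel ε (x - x₀) ≤ π⁻¹ * (ε / δ ^ 2) :=
        halfPlanePoissonKernel_le_of_le_abs hε.le hδ hx
    _ < b := by
      rw [inv_mul_lt_iff₀ Real.pi_pos, div_lt_iff₀ (by positivity)]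
      linarith

end halfPlanePoissonKernel

theorem tendsto_setIntegral_halfPlanePoissonKernel_smul {E : Type*} [NormedAddCommGroup E]
    [NormedSpace ℝ E] [CompleteSpace E] {g : ℝ → E} {s : Set ℝ} {x₀ : ℝ} (hs : MeasurableSet s)
    (hx₀ : s ∈ 𝓝 x₀) (hg : IntegrableOn g s) (hgx₀ : ContinuousAt g x₀) :
    Tendsto (fun ε => ∫ x in s, halfPlanePoissonKernel ε (x - x₀) • g x) (𝓝[>] 0)
      (𝓝 (g x₀)) := by
  obtain ⟨δ, hδ, hball⟩ := Metric.mem_nhds_iff.1 hx₀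
  rw [Real.ball_eq_Ioo] at hball
  refine tendsto_setIntegral_peak_smul_of_integrableOn_of_tendsto hs measurableSet_Ioo hball
    (mem_nhdsWithin_of_mem_nhds (Ioo_mem_nhds (by linarith) (by linarith))) measure_Ioo_lt_top.ne
    ?_ ?_ ?_ ?_ hg (hgx₀.tendsto.mono_left nhdsWithin_le_nhds)
  · filter_upwards [self_mem_nhdsWithin] with ε (hε : 0 < ε) x _
      using halfPlanePoissonKernel_nonneg hε.le _
  · intro u hu hx₀u
    obtain ⟨r, hr, hru⟩ := Metric.isOpen_iff.1 hu x₀ hx₀u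
    refine (tendstoUniformlyOn_halfPlanePoissonKernel_sub hr x₀).mono fun x hx => ?_
    simpa [Real.dist_eq] using fun h => hx.2 (hru h)
  · refine (tendsto_integral_halfPlanePoissonKernel (neg_lt_zero.2 hδ) hδ).congr fun ε => ?_
    rw [← integral_Ioc_eq_integral_Ioo, ← intervalIntegral.integral_of_le (by linarith),
      intervalIntegral.integral_comp_sub_right (halfPlanePoissonKernel ε)]
    ring_nf
  · filter_upwards [self_mem_nhdsWithin] with ε (hε : 0 < ε)
    exact ((continuous_halfPlanePoissonKernel hε.ne').comp
      (continuous_sub_right x₀)).aestronglyMeasurable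

lemma Complex.im_ofReal_div_ofReal_add_mul_I (a t ε : ℝ) :
    ((a : ℂ) / (t + ε * I)).im = -π * halfPlanePoissonKernel ε t * a := by
  simp only [div_im, normSq_apply, ofReal_re, ofReal_im, add_re, add_im, mul_re, mul_im, I_re,
    I_im, halfPlanePoissonKernel]
  field_simp
  ring

lemma integrableOn_div_add_ofReal {f : ℝ → ℂ} {s : Set ℝ} (hf : IntegrableOn f s) {z : ℂ}
    (hz : z.im ≠ 0) : IntegrableOn (fun x => f x / (z + x)) s := by
  refine Integrable.mono' (hf.norm.div_const |z.im|)
    (hf.aestronglyMeasurable.div₀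
      (by fun_prop : Continuous fun x : ℝ => z + x).aestronglyMeasurable)
    (ae_of_all _ fun x => ?_)
  rw [norm_div]
  gcongr
  simpa using abs_im_le_norm (z + x)

theorem im_boundary_value_exp (α : ℝ) (hα : 0 < α) (s : ℝ) (hs : 0 < s) :
    Tendsto (fun ε : ℝ =>
        (∫ x in Ioi (0:ℝ), Complex.exp (-(α:ℂ) * x) / ((-(s:ℂ) + ε * Complex.I) + x)).im)
      (nhdsWithin 0 (Ioi 0))
      (nhds (-Real.pi * Real.exp (-α * s))) := by
  have hg : IntegrableOn (fun x => Real.exp (-α * x)) (Ioi 0) := exp_neg_integrableOn_Ioi 0 hα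
  refine ((tendsto_setIntegral_halfPlanePoissonKernel_smul measurableSet_Ioi (Ioi_mem_nhds hs) hg
    (by fun_prop)).const_mul (-π)).congr' ?_
  filter_upwards [self_mem_nhdsWithin] with ε (hε : 0 < ε)
  have hz : (-(s:ℂ) + ε * I).im ≠ 0 := by simpa using hε.ne'
  have hgℂ : IntegrableOn (fun x : ℝ => Complex.exp (-(α:ℂ) * x)) (Ioi 0) :=
    integrableOn_exp_mul_complex_Ioi (by simpa using hα) 0
  rw [← integral_const_mul, ← RCLike.im_to_complex,
    ← integral_im (integrableOn_div_add_ofReal hgℂ hz)]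
  refine setIntegral_congr_fun measurableSet_Ioi fun x _ => ?_
  rw [show -(s:ℂ) + ε * I + x = ((x - s : ℝ) : ℂ) + ε * I by push_cast; ring,
    show -(α:ℂ) * x = ((-α * x : ℝ) : ℂ) by push_cast; ring, ← ofReal_exp, RCLike.im_to_complex,
    Complex.im_ofReal_div_ofReal_add_mul_I, smul_eq_mul]
  ring
end

section
/- Let Z(x) = Σ_{k=1}^l γ_k e^{λ_k x} with Re λ_k < 0 and γ_k ∈ ℂ for all k. Then the function r(p) = ∫₀^∞ Z(x)/(p + x) dx is holomorphic on ℂ ∖ (-∞, 0], and for every s > 0 the nontangential boundary jump satisfies r(-s + i0) - r(-s - i0) = -2πi Z(s), i.e. lim_{ε→0⁺}[r(-s+iε) - r(-s-iε)] = -2πi Z(s). -/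
/-!
Both claims hold for every `f` integrable on `(0, ∞)`; the exponential sum only contributes
integrability and continuity. For `p₀` off the cut `(-∞, 0]`, `‖p + x‖` stays above half the distance
from `p₀` to the cut for all `x ≥ 0` and `p` near `p₀`, so one may differentiate under the
integral sign. Across the cut,
`1 / (-s + iε + x) - 1 / (-s - iε + x) = -2πi · P_ε(x - s)`, where `P_ε` is the Cauchy density of
scale `ε`: an approximate identity as `ε → 0⁺`, so the jump tends to `-2πi f(s)` at every point
`s > 0` where `f` is continuous.
-/

open MeasureTheory Set Complex Filter Topology
open ProbabilityTheory
open scoped Real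

noncomputable def stieltjesTransform (f : ℝ → ℂ) (p : ℂ) : ℂ :=
  ∫ x in Ioi (0 : ℝ), f x / (p + x)

lemma infDist_nonpos_reals_le_norm_add (p : ℂ) {x : ℝ} (hx : 0 ≤ x) :
    Metric.infDist p (ofReal '' Iic 0) ≤ ‖p + x‖ := by
  have hmem : ((-x : ℝ) : ℂ) ∈ ofReal '' Iic 0 := mem_image_of_mem _ (by simpa using hx)
  simpa [dist_eq] using Metric.infDist_le_dist_of_mem hmem

lemma integrable_div_add_of_le_norm {μ : Measure ℝ} {f : ℝ → ℂ} (hf : Integrable f μ)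
    {p : ℂ} {c : ℝ} (hc : 0 < c) (h : ∀ᵐ x : ℝ ∂μ, c ≤ ‖p + x‖) :
    Integrable (fun x => f x / (p + x)) μ := by
  simp_rw [div_eq_mul_inv]
  refine hf.mul_bdd (c := c⁻¹) (by fun_prop) ?_
  filter_upwards [h] with x hx
  rw [norm_inv]
  exact inv_anti₀ hc hx

lemma integrable_div_add_of_im_ne_zero {μ : Measure ℝ} {f : ℝ → ℂ} (hf : Integrable f μ)
    {p : ℂ} (hp : p.im ≠ 0) : Integrable (fun x => f x / (p + x)) μ :=
  integrable_div_add_of_le_norm hf (abs_pos.2 hp) <| .of_forall fun x => by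
    simpa using abs_im_le_norm (p + (x : ℂ))

lemma hasDerivAt_div_add (c a p : ℂ) (h : p + a ≠ 0) :
    HasDerivAt (fun q => c / (q + a)) (-(c / (p + a) ^ 2)) p := by
  simpa [div_eq_mul_inv] using ((hasDerivAt_inv h).comp_add_const p a).const_mul c

theorem differentiableOn_stieltjesTransform {f : ℝ → ℂ} (hf : IntegrableOn f (Ioi 0)) :
    DifferentiableOn ℂ (stieltjesTransform f) (ofReal '' Iic 0)ᶜ := by
  intro p₀ hp₀
  set δ := Metric.infDist p₀ (ofReal '' Iic (0 : ℝ))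
  have hδ : 0 < δ :=
    ((isometry_ofReal.isClosedEmbedding.isClosedMap _ isClosed_Iic).notMem_iff_infDist_pos
      ⟨0, 0, self_mem_Iic, ofReal_zero⟩).mp hp₀
  have hbound : ∀ᵐ x : ℝ ∂(volume.restrict (Ioi 0)), ∀ p ∈ Metric.ball p₀ (δ / 2),
      δ / 2 ≤ ‖p + (x : ℂ)‖ := by
    filter_upwards [ae_restrict_mem measurableSet_Ioi] with x (hx : 0 < x) p hp
    have := Metric.infDist_le_infDist_add_dist (x := p₀) (y := p) (s := ofReal '' Iic (0 : ℝ))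
    have := infDist_nonpos_reals_le_norm_add p hx.le
    rw [Metric.mem_ball, dist_comm] at hp
    linarith
  have hball := Metric.ball_mem_nhds p₀ (half_pos hδ)
  have hint : ∀ p ∈ Metric.ball p₀ (δ / 2),
      IntegrableOn (fun x : ℝ => f x / (p + x)) (Ioi 0) := fun p hp =>
    integrable_div_add_of_le_norm hf (half_pos hδ) (hbound.mono fun x hx => hx p hp)
  have hderiv_le : ∀ᵐ x : ℝ ∂(volume.restrict (Ioi 0)), ∀ p ∈ Metric.ball p₀ (δ / 2),
      ‖-(f x / (p + x) ^ 2)‖ ≤ ‖f x‖ / (δ / 2) ^ 2 := by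
    filter_upwards [hbound] with x hx p hp
    rw [norm_neg, norm_div, norm_pow]
    have := hx p hp
    gcongr
  have hderiv : ∀ᵐ x : ℝ ∂(volume.restrict (Ioi 0)), ∀ p ∈ Metric.ball p₀ (δ / 2),
      HasDerivAt (fun q => f x / (q + x)) (-(f x / (p + x) ^ 2)) p := by
    filter_upwards [hbound] with x hx p hp
    exact hasDerivAt_div_add _ _ _ (norm_pos_iff.1 ((half_pos hδ).trans_le (hx p hp)))
  exact (hasDerivAt_integral_of_dominated_loc_of_deriv_le hball
    (Filter.mem_of_superset hball fun p hp => (hint p hp).aestronglyMeasurable)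
    (hint p₀ (Metric.mem_ball_self (half_pos hδ))) (hf.1.div₀ (by fun_prop)).neg hderiv_le
    (hf.norm.div_const _) hderiv).2.differentiableAt.differentiableWithinAt

lemma inv_sub_inv_eq_cauchyPDFReal {ε : ℝ} (hε : 0 < ε) (s x : ℝ) :
    (-(s : ℂ) + ε * I + x)⁻¹ - (-(s : ℂ) - ε * I + x)⁻¹ =
      -2 * π * I * cauchyPDFReal s ε.toNNReal x := by
  have h₁ : -(s : ℂ) + ε * I + x ≠ 0 := fun h => hε.ne' <| by simpa using congrArg im h
  have h₂ : -(s : ℂ) - ε * I + x ≠ 0 := fun h => hε.ne' <| by simpa using congrArg im h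
  have hq : (((x - s) ^ 2 + ε ^ 2 : ℝ) : ℂ) ≠ 0 := ofReal_ne_zero.2 (by positivity)
  have hπ : (π : ℂ) ≠ 0 := ofReal_ne_zero.2 Real.pi_ne_zero
  rw [cauchyPDFReal_def, Real.coe_toNNReal _ hε.le]
  push_cast at hq ⊢
  field_simp
  linear_combination (-2 * ε ^ 3 * I) * I_sq

lemma tendsto_norm_mul_cauchyPDFReal_cobounded :
    Tendsto (fun x : ℝ => ‖x‖ * cauchyPDFReal 0 1 x) (Bornology.cobounded ℝ) (𝓝 0) := by
  have hinv : Tendsto (fun x : ℝ => π⁻¹ * ‖x‖⁻¹) (Bornology.cobounded ℝ) (𝓝 0) := by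
    simpa using
      (tendsto_inv_atTop_zero.comp (tendsto_norm_cobounded_atTop (E := ℝ))).const_mul π⁻¹
  refine squeeze_zero (fun x => ?_) (fun x => ?_) hinv
  · rw [cauchyPDFReal_def]; positivity
  rw [cauchyPDFReal_def]
  rcases eq_or_ne x 0 with rfl | hx
  · simp
  have hx' : 0 < ‖x‖ := norm_pos_iff.2 hx
  rw [NNReal.coe_one, one_pow, sub_zero, mul_one, ← sq_abs, ← Real.norm_eq_abs]
  field_simp
  nlinarith

theorem tendsto_integral_cauchyPDFReal_smul {E : Type*} [NormedAddCommGroup E] [NormedSpace ℝ E]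
    [CompleteSpace E]
    {g : ℝ → E} (hg : Integrable g) {s : ℝ} (hgs : ContinuousAt g s) :
    Tendsto (fun ε : ℝ => ∫ x, cauchyPDFReal s ε.toNNReal x • g x) (𝓝[>] 0) (𝓝 (g s)) := by
  have hpeak := tendsto_integral_comp_smul_smul_of_integrable'
    (fun x => (cauchyPDF_pos 0 one_ne_zero x).le)
    (integral_cauchyPDFReal_eq_one 0 one_ne_zero)
    (by simpa using tendsto_norm_mul_cauchyPDFReal_cobounded) hg hgs
  refine (hpeak.comp tendsto_inv_nhdsGT_zero).congr' ?_
  filter_upwards [self_mem_nhdsWithin] with ε (hε : 0 < ε)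
  refine integral_congr_ae (.of_forall fun x => ?_)
  simp only [Module.finrank_self, NNReal.coe_one, pow_one, cauchyPDFReal_def,
    Real.coe_toNNReal _ hε.le, smul_eq_mul]
  congr 1
  field_simp
  ring

theorem tendsto_stieltjesTransform_jump {f : ℝ → ℂ} (hf : IntegrableOn f (Ioi 0)) {s : ℝ}
    (hs : 0 < s) (hfs : ContinuousAt f s) :
    Tendsto (fun ε : ℝ => stieltjesTransform f (-s + ε * I) - stieltjesTransform f (-s - ε * I))
      (𝓝[>] 0) (𝓝 (-2 * π * I * f s)) := by
  have hg : ContinuousAt ((Ioi 0).indicator f) s :=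
    hfs.congr <| eventuallyEq_of_mem (Ioi_mem_nhds hs) fun x hx => (indicator_of_mem hx f).symm
  rw [← indicator_of_mem (mem_Ioi.2 hs) f]
  refine ((tendsto_integral_cauchyPDFReal_smul
    ((integrable_indicator_iff measurableSet_Ioi).2 hf) hg).const_mul _).congr' ?_
  filter_upwards [self_mem_nhdsWithin] with ε (hε : 0 < ε)
  rw [stieltjesTransform, stieltjesTransform, ← integral_sub
    (integrable_div_add_of_im_ne_zero hf (p := -s + ε * I) (by simpa using hε.ne'))
    (integrable_div_add_of_im_ne_zero hf (p := -s - ε * I) (by simpa using hε.ne')),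
    ← integral_const_mul, ← integral_indicator measurableSet_Ioi]
  refine integral_congr_ae (.of_forall fun x => ?_)
  by_cases hx : x ∈ Ioi 0
  · simp only [indicator_of_mem hx, div_eq_mul_inv, ← mul_sub, inv_sub_inv_eq_cauchyPDFReal hε,
      real_smul]
    ring
  · simp [indicator_of_notMem hx]

theorem integrableOn_Ioi_sum_mul_cexp {ι : Type*} (t : Finset ι) (γ lam : ι → ℂ)
    (hre : ∀ k ∈ t, (lam k).re < 0) :
    IntegrableOn (fun x : ℝ => ∑ k ∈ t, γ k * cexp (lam k * x)) (Ioi 0) :=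
  integrable_finsetSum _ fun k hk =>
    (integrableOn_exp_mul_complex_Ioi (hre k hk) 0).const_mul (γ k)

theorem exp_sum_stieltjes_holomorphic_and_jump (l : ℕ) (γ lam : Fin l → ℂ)
    (hre : ∀ k, (lam k).re < 0)
    (Z : ℝ → ℂ) (hZ : ∀ x : ℝ, Z x = ∑ k, γ k * Complex.exp (lam k * x)) :
    DifferentiableOn ℂ
      (fun p : ℂ => ∫ x in Ioi (0:ℝ), Z x / (p + x))
      ((Complex.ofReal '' Iic (0:ℝ))ᶜ) ∧
    ∀ s : ℝ, 0 < s →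
      Tendsto (fun ε : ℝ =>
          (∫ x in Ioi (0:ℝ), Z x / (-(s:ℂ) + ε * Complex.I + x)) -
          ∫ x in Ioi (0:ℝ), Z x / (-(s:ℂ) - ε * Complex.I + x))
        (nhdsWithin 0 (Ioi 0))
        (nhds (-2 * Real.pi * Complex.I * Z s)) := by
  obtain rfl : Z = fun x : ℝ => ∑ k, γ k * cexp (lam k * x) := funext hZ
  have hint := integrableOn_Ioi_sum_mul_cexp Finset.univ γ lam fun k _ => hre k
  have hcont : Continuous fun x : ℝ => ∑ k, γ k * cexp (lam k * x) := by fun_prop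
  exact ⟨differentiableOn_stieltjesTransform hint,
    fun s hs => tendsto_stieltjesTransform_jump hint hs hcont.continuousAt⟩
end

section
/- Let λ ∈ ℂ with Re λ < 0. The function p ↦ ∫₀^∞ (e^{-x₁}/p) · (1/((-i x₁/p) - λ)) dx₁ is holomorphic on the sector D* = {p ∈ ℂ : -π/2 < arg p < φ₀}, where 0 < φ₀ < min(π/2, arctan(|Re λ|/|Im λ|)) (with the convention that the bound is π/2 when Im λ = 0). -/
/-!
Clearing `p`, the integrand is `e^{-x} / (-i x - λ p)`, so `F(p) = G(λ p)` with
`G(z) = ∫₀^∞ e^{-x} / (-i x - z) dx`. Since `e^{-x}` is integrable and `-i x` stays on the ray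
`-i[0, ∞)`, differentiation under the integral sign shows that `G` is holomorphic off that ray.
The sector condition on `φ` says exactly that `λ p` never lies on the ray: `λ` maps the
right half-plane onto the ray only along the direction `arctan (|Re λ| / |Im λ|)`, and only when
`Im λ < 0`.
-/

open MeasureTheory Set Complex

theorem hasDerivAt_div_sub {c a z : ℂ} (h : a ≠ z) :
    HasDerivAt (fun z => c / (a - z)) (c / (a - z) ^ 2) z := by
  simpa [div_eq_mul_inv] using
    (((hasDerivAt_id' z).const_sub a).inv (sub_ne_zero.2 h)).const_mul c

theorem differentiableOn_integral_div_sub {α : Type*} [MeasurableSpace α] {μ : Measure α}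
    {f w : α → ℂ} {A : Set ℂ} (hf : Integrable f μ) (hw : AEStronglyMeasurable w μ)
    (hA : IsClosed A) (hwA : ∀ᵐ x ∂μ, w x ∈ A) :
    DifferentiableOn ℂ (fun z => ∫ x, f x / (w x - z) ∂μ) Aᶜ := by
  intro z₀ hz₀
  obtain ⟨r, hr, hball⟩ := Metric.isOpen_iff.1 hA.isOpen_compl z₀ hz₀
  obtain ⟨δ, hδ, rfl⟩ : ∃ δ, 0 < δ ∧ r = 2 * δ := ⟨r / 2, half_pos hr, by ring⟩
  have hsep : ∀ᵐ x ∂μ, ∀ z ∈ Metric.ball z₀ δ, δ ≤ ‖w x - z‖ := by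
    filter_upwards [hwA] with x hx z hz
    have hfar : 2 * δ ≤ dist (w x) z₀ := not_lt.1 fun h => hball (Metric.mem_ball.2 h) hx
    have := dist_triangle (w x) z z₀
    rw [Metric.mem_ball] at hz
    rw [← dist_eq_norm_sub]
    linarith
  have hmeas : ∀ z, AEStronglyMeasurable (fun x => f x / (w x - z)) μ := fun z =>
    hf.aestronglyMeasurable.div₀ (hw.sub aestronglyMeasurable_const)
  have hint : Integrable (fun x => f x / (w x - z₀)) μ := by
    refine (hf.norm.div_const δ).mono' (hmeas z₀) ?_
    filter_upwards [hsep] with x hx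
    rw [norm_div]
    gcongr
    exact hx z₀ (Metric.mem_ball_self hδ)
  have hderiv := hasDerivAt_integral_of_dominated_loc_of_deriv_le
    (F' := fun z x => f x / (w x - z) ^ 2) (bound := fun x => ‖f x‖ / δ ^ 2)
    (Metric.ball_mem_nhds z₀ hδ) (.of_forall hmeas) hint
    (hf.aestronglyMeasurable.div₀ ((hw.sub aestronglyMeasurable_const).pow 2)) ?_
    (hf.norm.div_const _) ?_
  · exact hderiv.2.differentiableAt.differentiableWithinAt
  · filter_upwards [hsep] with x hx z hz
    rw [norm_div, norm_pow]
    gcongr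
    exact hx z hz
  · filter_upwards [hsep] with x hx z hz
    exact hasDerivAt_div_sub (sub_ne_zero.1 (norm_pos_iff.1 (hδ.trans_le (hx z hz))))

theorem integrableOn_cexp_neg_Ioi (c : ℝ) :
    IntegrableOn (fun x : ℝ => Complex.exp (-(x : ℂ))) (Ioi c) := by
  simpa [IntegrableOn] using (integrableOn_exp_neg_Ioi c).ofReal (𝕜 := ℂ)

def negImagRay : Set ℂ := {z | z.re = 0 ∧ z.im ≤ 0}

theorem isClosed_negImagRay : IsClosed negImagRay :=
  (isClosed_eq continuous_re continuous_const).inter (isClosed_le continuous_im continuous_const)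

theorem neg_I_mul_mem_negImagRay {x : ℝ} (hx : 0 ≤ x) : -I * x ∈ negImagRay := by
  simp [negImagRay, hx]

theorem Complex.arg_eq_arctan_of_re_pos {z : ℂ} (hz : 0 < z.re) :
    arg z = Real.arctan (z.im / z.re) := by
  have := abs_lt.1 (abs_arg_lt_pi_div_two_iff.2 (Or.inl hz))
  rw [← tan_arg, Real.arctan_tan this.1 this.2]

theorem arg_eq_arctan_of_mul_mem_negImagRay {l p : ℂ} (hl : l.re < 0) (hp : 0 < p.re)
    (hlp : l * p ∈ negImagRay) :
    l.im < 0 ∧ p.arg = Real.arctan (|l.re| / |l.im|) := by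
  obtain ⟨hre, him⟩ := hlp
  rw [mul_re] at hre
  rw [mul_im] at him
  have hlim : l.im < 0 := by
    by_contra! h
    rcases h.eq_or_lt with h | h
    · rw [← h] at hre
      nlinarith [mul_neg_of_neg_of_pos hl hp]
    · have : p.im < 0 := by nlinarith [mul_neg_of_neg_of_pos hl hp]
      nlinarith [mul_pos_of_neg_of_neg hl this, mul_pos h hp]
  refine ⟨hlim, ?_⟩
  rw [arg_eq_arctan_of_re_pos hp, abs_of_neg hl, abs_of_neg hlim, neg_div_neg_eq]
  congr 1
  rw [div_eq_div_iff hp.ne' hlim.ne]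
  linarith

theorem mul_notMem_negImagRay_of_mem_sector {l p : ℂ} {φ : ℝ} (hl : l.re < 0)
    (hφ1 : φ < Real.pi / 2) (hφ2 : l.im ≠ 0 → φ < Real.arctan (|l.re| / |l.im|))
    (hp : p ≠ 0 ∧ -(Real.pi / 2) < p.arg ∧ p.arg < φ) :
    l * p ∉ negImagRay := by
  obtain ⟨hp0, harg₁, harg₂⟩ := hp
  intro hlp
  have hre : 0 < p.re :=
    (abs_arg_lt_pi_div_two_iff.1 (abs_lt.2 ⟨harg₁, harg₂.trans hφ1⟩)).resolve_right hp0
  obtain ⟨hlim, hargp⟩ := arg_eq_arctan_of_mul_mem_negImagRay hl hre hlp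
  exact (hφ2 hlim.ne).not_ge (hargp ▸ harg₂.le)

theorem F_holomorphic_on_sector_general (l : ℂ) (hl : l.re < 0) (φ : ℝ)
    (hφ1 : φ < Real.pi / 2)
    (hφ2 : l.im ≠ 0 → φ < Real.arctan (|l.re| / |l.im|)) :
    DifferentiableOn ℂ
      (fun p : ℂ => ∫ x₁ in Ioi (0:ℝ),
        (Complex.exp (-(x₁:ℂ)) / p) * (1 / ((-Complex.I * x₁ / p) - l)))
      {p : ℂ | p ≠ 0 ∧ -(Real.pi / 2) < p.arg ∧ p.arg < φ} := by
  have hG := differentiableOn_integral_div_sub (integrableOn_cexp_neg_Ioi 0)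
    (by fun_prop : AEStronglyMeasurable (fun x : ℝ => -I * x) _) isClosed_negImagRay
    (ae_restrict_of_forall_mem measurableSet_Ioi fun x (hx : 0 < x) =>
      neg_I_mul_mem_negImagRay hx.le)
  refine (hG.comp (differentiableOn_id.const_mul l)
    fun p hp => mul_notMem_negImagRay_of_mem_sector hl hφ1 hφ2 hp).congr fun p hp => ?_
  refine integral_congr_ae (.of_forall fun x => ?_)
  field_simp [hp.1]

theorem F_holomorphic_on_sector (l : ℂ) (hl : l.re < 0) (φ : ℝ) (hφ0 : 0 < φ)
    (hφ1 : φ < Real.pi / 2)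
    (hφ2 : l.im ≠ 0 → φ < Real.arctan (|l.re| / |l.im|)) :
    DifferentiableOn ℂ
      (fun p : ℂ => ∫ x₁ in Ioi (0:ℝ),
        (Complex.exp (-(x₁:ℂ)) / p) * (1 / ((-Complex.I * x₁ / p) - l)))
      {p : ℂ | p ≠ 0 ∧ -(Real.pi / 2) < p.arg ∧ p.arg < φ} :=
  F_holomorphic_on_sector_general l hl φ hφ1 hφ2
end
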